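/- The tube algebra 𝒯 of G is isomorphic as a ℂ-algebra to the product ℂ × ℂ × M₂(ℂ) × M₂(ℂ) × M₂(ℂ) × M₂(ℂ) × M₃(ℂ) × M₃(ℂ) of full matrix algebras. In particular, 𝒯 is a semisimple 36-dimensional ℂ-algebra with exactly 8 isomorphism classes of simple modules, of dimensions 1, 1, 2, 2, 2, 2, 3, 3 (these classes parameterize the anyons of the Vec(S₃) Levin–Wen phase). -/
import Mathlib


noncomputable section

/-- The underlying set of the group `G = ℤ/2 ⋉ ℤ/3 ≅ S₃`. -/
abbrev G6 := ZMod 2 × ZMod 3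

/-- The semidirect product multiplication of `G`. -/
def gmul (p q : G6) : G6 :=
  (p.1 + q.1, (1 + (q.1.val : ZMod 3)) * p.2 + q.2)

/-- Inversion in `G`. -/
def ginv (p : G6) : G6 :=
  (p.1, -((1 + (p.1.val : ZMod 3)) * p.2))

/-- Conjugation `h g h⁻¹` in `G`. -/
def gconj (h g : G6) : G6 := gmul (gmul h g) (ginv h)

/-- The tube algebra of `G`: the ℂ-vector space with basis `T[g,h]`, `g h : G6`. -/
abbrev Tube := (G6 × G6) → ℂ

/-- The tube algebra multiplication: the bilinear extension of
`T[g₁,h₁]·T[g₂,h₂] = T[g₂,h₁h₂]` if `g₁ = h₂g₂h₂⁻¹`, and `0` otherwise. -/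
def tmul (x y : Tube) : Tube := fun p =>
  ∑ q : G6 × G6, ∑ r : G6 × G6,
    (if q.1 = gconj r.2 r.1 ∧ p.1 = r.1 ∧ p.2 = gmul q.2 r.2 then x q * y r else 0)

/-- `n × n` complex matrices. -/
abbrev Mat (n : ℕ) := Matrix (Fin n) (Fin n) ℂ

/-! ### The ring `ℤ[ζ]` of Eisenstein integers, `ζ² = -1 - ζ`. -/

structure Eis where
  x : ℤ
  y : ℤ
deriving DecidableEq

namespace Eis

@[ext] theorem ext' {a b : Eis} (hx : a.x = b.x) (hy : a.y = b.y) : a = b := by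
  cases a; cases b; simp_all

instance : Zero Eis := ⟨⟨0,0⟩⟩
instance : One Eis := ⟨⟨1,0⟩⟩
instance : Add Eis := ⟨fun a b => ⟨a.x+b.x, a.y+b.y⟩⟩
instance : Neg Eis := ⟨fun a => ⟨-a.x, -a.y⟩⟩
instance : Mul Eis := ⟨fun a b => ⟨a.x*b.x - a.y*b.y, a.x*b.y + a.y*b.x - a.y*b.y⟩⟩

@[simp] theorem zero_x : (0 : Eis).x = 0 := rfl
@[simp] theorem zero_y : (0 : Eis).y = 0 := rfl
@[simp] theorem one_x : (1 : Eis).x = 1 := rfl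
@[simp] theorem one_y : (1 : Eis).y = 0 := rfl
@[simp] theorem add_x (a b : Eis) : (a+b).x = a.x + b.x := rfl
@[simp] theorem add_y (a b : Eis) : (a+b).y = a.y + b.y := rfl
@[simp] theorem neg_x (a : Eis) : (-a).x = -a.x := rfl
@[simp] theorem neg_y (a : Eis) : (-a).y = -a.y := rfl
@[simp] theorem mul_x (a b : Eis) : (a*b).x = a.x*b.x - a.y*b.y := rfl
@[simp] theorem mul_y (a b : Eis) : (a*b).y = a.x*b.y + a.y*b.x - a.y*b.y := rfl

instance commRing : CommRing Eis where
  add_assoc a b c := by ext <;> simp <;> ring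
  zero_add a := by ext <;> simp
  add_zero a := by ext <;> simp
  add_comm a b := by ext <;> simp <;> ring
  mul_assoc a b c := by ext <;> simp <;> ring
  one_mul a := by ext <;> simp
  mul_one a := by ext <;> simp
  left_distrib a b c := by ext <;> simp <;> ring
  right_distrib a b c := by ext <;> simp <;> ring
  mul_comm a b := by ext <;> simp <;> ring
  zero_mul a := by ext <;> simp
  mul_zero a := by ext <;> simp
  neg_add_cancel a := by ext <;> simp
  nsmul := nsmulRec
  zsmul := zsmulRec

end Eis

/-! ### Small tuple matrices over `Eis`, with explicit multiplication. -/

structure M2 where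
  a : Eis
  b : Eis
  c : Eis
  d : Eis
deriving DecidableEq

structure M3 where
  a : Eis
  b : Eis
  c : Eis
  d : Eis
  e : Eis
  f : Eis
  g : Eis
  h : Eis
  i : Eis
deriving DecidableEq

def M2.mul (A B : M2) : M2 :=
  ⟨A.a*B.a + A.b*B.c, A.a*B.b + A.b*B.d, A.c*B.a + A.d*B.c, A.c*B.b + A.d*B.d⟩

def M2.zero : M2 := ⟨0,0,0,0⟩

def M2.sc (k : Eis) (A : M2) : M2 := ⟨k*A.a, k*A.b, k*A.c, k*A.d⟩

def M3.mul (A B : M3) : M3 :=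
  ⟨A.a*B.a + A.b*B.d + A.c*B.g, A.a*B.b + A.b*B.e + A.c*B.h, A.a*B.c + A.b*B.f + A.c*B.i,
   A.d*B.a + A.e*B.d + A.f*B.g, A.d*B.b + A.e*B.e + A.f*B.h, A.d*B.c + A.e*B.f + A.f*B.i,
   A.g*B.a + A.h*B.d + A.i*B.g, A.g*B.b + A.h*B.e + A.i*B.h, A.g*B.c + A.h*B.f + A.i*B.i⟩

def M3.zero : M3 := ⟨0,0,0,0,0,0,0,0,0⟩

def M3.sc (k : Eis) (A : M3) : M3 :=
  ⟨k*A.a, k*A.b, k*A.c, k*A.d, k*A.e, k*A.f, k*A.g, k*A.h, k*A.i⟩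

/-- `trace (A * B)` for our `2 × 2` tuple matrices. -/
def tr2 (A B : M2) : Eis := A.a*B.a + A.b*B.c + A.c*B.b + A.d*B.d

/-- `trace (A * B)` for our `3 × 3` tuple matrices. -/
def tr3 (A B : M3) : Eis :=
  A.a*B.a + A.b*B.d + A.c*B.g + A.d*B.b + A.e*B.e + A.f*B.h + A.g*B.c + A.h*B.f + A.i*B.i

/-! ### The eight irreducible representations of the tube algebra, over `Eis`. -/

def zeta : Eis := ⟨0,1⟩
def zpow3 (k : ZMod 3) : Eis := zeta ^ k.val

def bTriv (q : G6 × G6) : Eis := if q.1 = ((0:ZMod 2),(0:ZMod 3)) then 1 else 0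

def bSign (q : G6 × G6) : Eis :=
  if q.1 = ((0:ZMod 2),(0:ZMod 3)) then (if q.2.1 = 0 then 1 else -1) else 0

def bStdE (q : G6 × G6) (i j : Fin 2) : Eis :=
  if q.1 = ((0:ZMod 2),(0:ZMod 3)) then
    (if q.2.1 = 0 then
      (if i = j then (if i = 0 then zpow3 q.2.2 else zpow3 (-q.2.2)) else 0)
     else
      (if i = j then 0 else (if i = 0 then zpow3 (-q.2.2) else zpow3 q.2.2)))
  else 0

def rotIdx (g : G6) : Fin 2 := if g.2 = 1 then 0 else 1
def rotK : Fin 2 → G6 := ![((0:ZMod 2),(0:ZMod 3)), (1,0)]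

def bRotE (j : ZMod 3) (q : G6 × G6) (i' i : Fin 2) : Eis :=
  if q.1.1 = 0 ∧ q.1.2 ≠ 0 then
    (if i = rotIdx q.1 ∧ i' = rotIdx (gconj q.2 q.1) then
      zpow3 (j * (gmul (gmul (ginv (rotK i')) q.2) (rotK i)).2)
     else 0)
  else 0

def reflIdx (g : G6) : Fin 3 := ⟨g.2.val, g.2.val_lt⟩

def bReflE (e : Eis) (q : G6 × G6) (i' i : Fin 3) : Eis :=
  if q.1.1 = 1 then
    (if i = reflIdx q.1 ∧ i' = reflIdx (gconj q.2 q.1) then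
      (if q.2.1 = 0 then 1 else e)
     else 0)
  else 0

def m2of (f : Fin 2 → Fin 2 → Eis) : M2 := ⟨f 0 0, f 0 1, f 1 0, f 1 1⟩
def m3of (f : Fin 3 → Fin 3 → Eis) : M3 :=
  ⟨f 0 0, f 0 1, f 0 2, f 1 0, f 1 1, f 1 2, f 2 0, f 2 1, f 2 2⟩

abbrev TK := Eis × Eis × M2 × M2 × M2 × M2 × M3 × M3

def TK.mul (u v : TK) : TK :=
  (u.1*v.1, u.2.1*v.2.1, u.2.2.1.mul v.2.2.1, u.2.2.2.1.mul v.2.2.2.1,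
   u.2.2.2.2.1.mul v.2.2.2.2.1, u.2.2.2.2.2.1.mul v.2.2.2.2.2.1,
   u.2.2.2.2.2.2.1.mul v.2.2.2.2.2.2.1, u.2.2.2.2.2.2.2.mul v.2.2.2.2.2.2.2)

def TK.zero : TK := (0, 0, M2.zero, M2.zero, M2.zero, M2.zero, M3.zero, M3.zero)

/-- The direct sum of the eight irreducible representations, evaluated on basis vectors. -/
def BK (q : G6 × G6) : TK :=
  (bTriv q, bSign q, m2of (bStdE q), m2of (bRotE 0 q), m2of (bRotE 1 q),
   m2of (bRotE 2 q), m3of (bReflE 1 q), m3of (bReflE (-1) q))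

/-- The dual (inverse) system of vectors, given by scaled representations at
`(h g h⁻¹, h⁻¹)`. -/
def NK (q : G6 × G6) : TK :=
  let c : G6 × G6 := (gconj q.2 q.1, ginv q.2)
  (bTriv c, bSign c, M2.sc 2 (m2of (bStdE c)), M2.sc 2 (m2of (bRotE 0 c)),
   M2.sc 2 (m2of (bRotE 1 c)), M2.sc 2 (m2of (bRotE 2 c)),
   M3.sc 3 (m3of (bReflE 1 c)), M3.sc 3 (m3of (bReflE (-1) c)))

/-- The pairing `⟨u, v⟩ = Σ blocks trace (u_i v_i)`. -/
def TK.pair (u v : TK) : Eis :=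
  u.1*v.1 + u.2.1*v.2.1 + tr2 u.2.2.1 v.2.2.1 + tr2 u.2.2.2.1 v.2.2.2.1 +
  tr2 u.2.2.2.2.1 v.2.2.2.2.1 + tr2 u.2.2.2.2.2.1 v.2.2.2.2.2.1 +
  tr3 u.2.2.2.2.2.2.1 v.2.2.2.2.2.2.1 + tr3 u.2.2.2.2.2.2.2 v.2.2.2.2.2.2.2

set_option synthInstance.maxSize 1000 in
set_option maxRecDepth 100000 in
set_option maxHeartbeats 1000000 in
private theorem keyK_0 : ∀ r : G6 × G6,
    TK.mul (BK (((0:ZMod 2),(0:ZMod 3)),((0:ZMod 2),(0:ZMod 3)))) (BK r) = if (((0:ZMod 2),(0:ZMod 3)) : G6) = gconj r.2 r.1 then BK (r.1, gmul ((0:ZMod 2),(0:ZMod 3)) r.2) else TK.zero := by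
  decide

set_option synthInstance.maxSize 1000 in
set_option maxRecDepth 100000 in
set_option maxHeartbeats 1000000 in
private theorem keyK_1 : ∀ r : G6 × G6,
    TK.mul (BK (((0:ZMod 2),(0:ZMod 3)),((0:ZMod 2),(1:ZMod 3)))) (BK r) = if (((0:ZMod 2),(0:ZMod 3)) : G6) = gconj r.2 r.1 then BK (r.1, gmul ((0:ZMod 2),(1:ZMod 3)) r.2) else TK.zero := by
  decide

set_option synthInstance.maxSize 1000 in
set_option maxRecDepth 100000 in
set_option maxHeartbeats 1000000 in
private theorem keyK_2 : ∀ r : G6 × G6,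
    TK.mul (BK (((0:ZMod 2),(0:ZMod 3)),((0:ZMod 2),(2:ZMod 3)))) (BK r) = if (((0:ZMod 2),(0:ZMod 3)) : G6) = gconj r.2 r.1 then BK (r.1, gmul ((0:ZMod 2),(2:ZMod 3)) r.2) else TK.zero := by
  decide

set_option synthInstance.maxSize 1000 in
set_option maxRecDepth 100000 in
set_option maxHeartbeats 1000000 in
private theorem keyK_3 : ∀ r : G6 × G6,
    TK.mul (BK (((0:ZMod 2),(0:ZMod 3)),((1:ZMod 2),(0:ZMod 3)))) (BK r) = if (((0:ZMod 2),(0:ZMod 3)) : G6) = gconj r.2 r.1 then BK (r.1, gmul ((1:ZMod 2),(0:ZMod 3)) r.2) else TK.zero := by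
  decide

set_option synthInstance.maxSize 1000 in
set_option maxRecDepth 100000 in
set_option maxHeartbeats 1000000 in
private theorem keyK_4 : ∀ r : G6 × G6,
    TK.mul (BK (((0:ZMod 2),(0:ZMod 3)),((1:ZMod 2),(1:ZMod 3)))) (BK r) = if (((0:ZMod 2),(0:ZMod 3)) : G6) = gconj r.2 r.1 then BK (r.1, gmul ((1:ZMod 2),(1:ZMod 3)) r.2) else TK.zero := by
  decide

set_option synthInstance.maxSize 1000 in
set_option maxRecDepth 100000 in
set_option maxHeartbeats 1000000 in
private theorem keyK_5 : ∀ r : G6 × G6,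
    TK.mul (BK (((0:ZMod 2),(0:ZMod 3)),((1:ZMod 2),(2:ZMod 3)))) (BK r) = if (((0:ZMod 2),(0:ZMod 3)) : G6) = gconj r.2 r.1 then BK (r.1, gmul ((1:ZMod 2),(2:ZMod 3)) r.2) else TK.zero := by
  decide

set_option synthInstance.maxSize 1000 in
set_option maxRecDepth 100000 in
set_option maxHeartbeats 1000000 in
private theorem keyK_6 : ∀ r : G6 × G6,
    TK.mul (BK (((0:ZMod 2),(1:ZMod 3)),((0:ZMod 2),(0:ZMod 3)))) (BK r) = if (((0:ZMod 2),(1:ZMod 3)) : G6) = gconj r.2 r.1 then BK (r.1, gmul ((0:ZMod 2),(0:ZMod 3)) r.2) else TK.zero := by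
  decide

set_option synthInstance.maxSize 1000 in
set_option maxRecDepth 100000 in
set_option maxHeartbeats 1000000 in
private theorem keyK_7 : ∀ r : G6 × G6,
    TK.mul (BK (((0:ZMod 2),(1:ZMod 3)),((0:ZMod 2),(1:ZMod 3)))) (BK r) = if (((0:ZMod 2),(1:ZMod 3)) : G6) = gconj r.2 r.1 then BK (r.1, gmul ((0:ZMod 2),(1:ZMod 3)) r.2) else TK.zero := by
  decide

set_option synthInstance.maxSize 1000 in
set_option maxRecDepth 100000 in
set_option maxHeartbeats 1000000 in
private theorem keyK_8 : ∀ r : G6 × G6,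
    TK.mul (BK (((0:ZMod 2),(1:ZMod 3)),((0:ZMod 2),(2:ZMod 3)))) (BK r) = if (((0:ZMod 2),(1:ZMod 3)) : G6) = gconj r.2 r.1 then BK (r.1, gmul ((0:ZMod 2),(2:ZMod 3)) r.2) else TK.zero := by
  decide

set_option synthInstance.maxSize 1000 in
set_option maxRecDepth 100000 in
set_option maxHeartbeats 1000000 in
private theorem keyK_9 : ∀ r : G6 × G6,
    TK.mul (BK (((0:ZMod 2),(1:ZMod 3)),((1:ZMod 2),(0:ZMod 3)))) (BK r) = if (((0:ZMod 2),(1:ZMod 3)) : G6) = gconj r.2 r.1 then BK (r.1, gmul ((1:ZMod 2),(0:ZMod 3)) r.2) else TK.zero := by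
  decide

set_option synthInstance.maxSize 1000 in
set_option maxRecDepth 100000 in
set_option maxHeartbeats 1000000 in
private theorem keyK_10 : ∀ r : G6 × G6,
    TK.mul (BK (((0:ZMod 2),(1:ZMod 3)),((1:ZMod 2),(1:ZMod 3)))) (BK r) = if (((0:ZMod 2),(1:ZMod 3)) : G6) = gconj r.2 r.1 then BK (r.1, gmul ((1:ZMod 2),(1:ZMod 3)) r.2) else TK.zero := by
  decide

set_option synthInstance.maxSize 1000 in
set_option maxRecDepth 100000 in
set_option maxHeartbeats 1000000 in
private theorem keyK_11 : ∀ r : G6 × G6,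
    TK.mul (BK (((0:ZMod 2),(1:ZMod 3)),((1:ZMod 2),(2:ZMod 3)))) (BK r) = if (((0:ZMod 2),(1:ZMod 3)) : G6) = gconj r.2 r.1 then BK (r.1, gmul ((1:ZMod 2),(2:ZMod 3)) r.2) else TK.zero := by
  decide

set_option synthInstance.maxSize 1000 in
set_option maxRecDepth 100000 in
set_option maxHeartbeats 1000000 in
private theorem keyK_12 : ∀ r : G6 × G6,
    TK.mul (BK (((0:ZMod 2),(2:ZMod 3)),((0:ZMod 2),(0:ZMod 3)))) (BK r) = if (((0:ZMod 2),(2:ZMod 3)) : G6) = gconj r.2 r.1 then BK (r.1, gmul ((0:ZMod 2),(0:ZMod 3)) r.2) else TK.zero := by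
  decide

set_option synthInstance.maxSize 1000 in
set_option maxRecDepth 100000 in
set_option maxHeartbeats 1000000 in
private theorem keyK_13 : ∀ r : G6 × G6,
    TK.mul (BK (((0:ZMod 2),(2:ZMod 3)),((0:ZMod 2),(1:ZMod 3)))) (BK r) = if (((0:ZMod 2),(2:ZMod 3)) : G6) = gconj r.2 r.1 then BK (r.1, gmul ((0:ZMod 2),(1:ZMod 3)) r.2) else TK.zero := by
  decide

set_option synthInstance.maxSize 1000 in
set_option maxRecDepth 100000 in
set_option maxHeartbeats 1000000 in
private theorem keyK_14 : ∀ r : G6 × G6,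
    TK.mul (BK (((0:ZMod 2),(2:ZMod 3)),((0:ZMod 2),(2:ZMod 3)))) (BK r) = if (((0:ZMod 2),(2:ZMod 3)) : G6) = gconj r.2 r.1 then BK (r.1, gmul ((0:ZMod 2),(2:ZMod 3)) r.2) else TK.zero := by
  decide

set_option synthInstance.maxSize 1000 in
set_option maxRecDepth 100000 in
set_option maxHeartbeats 1000000 in
private theorem keyK_15 : ∀ r : G6 × G6,
    TK.mul (BK (((0:ZMod 2),(2:ZMod 3)),((1:ZMod 2),(0:ZMod 3)))) (BK r) = if (((0:ZMod 2),(2:ZMod 3)) : G6) = gconj r.2 r.1 then BK (r.1, gmul ((1:ZMod 2),(0:ZMod 3)) r.2) else TK.zero := by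
  decide

set_option synthInstance.maxSize 1000 in
set_option maxRecDepth 100000 in
set_option maxHeartbeats 1000000 in
private theorem keyK_16 : ∀ r : G6 × G6,
    TK.mul (BK (((0:ZMod 2),(2:ZMod 3)),((1:ZMod 2),(1:ZMod 3)))) (BK r) = if (((0:ZMod 2),(2:ZMod 3)) : G6) = gconj r.2 r.1 then BK (r.1, gmul ((1:ZMod 2),(1:ZMod 3)) r.2) else TK.zero := by
  decide

set_option synthInstance.maxSize 1000 in
set_option maxRecDepth 100000 in
set_option maxHeartbeats 1000000 in
private theorem keyK_17 : ∀ r : G6 × G6,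
    TK.mul (BK (((0:ZMod 2),(2:ZMod 3)),((1:ZMod 2),(2:ZMod 3)))) (BK r) = if (((0:ZMod 2),(2:ZMod 3)) : G6) = gconj r.2 r.1 then BK (r.1, gmul ((1:ZMod 2),(2:ZMod 3)) r.2) else TK.zero := by
  decide

set_option synthInstance.maxSize 1000 in
set_option maxRecDepth 100000 in
set_option maxHeartbeats 1000000 in
private theorem keyK_18 : ∀ r : G6 × G6,
    TK.mul (BK (((1:ZMod 2),(0:ZMod 3)),((0:ZMod 2),(0:ZMod 3)))) (BK r) = if (((1:ZMod 2),(0:ZMod 3)) : G6) = gconj r.2 r.1 then BK (r.1, gmul ((0:ZMod 2),(0:ZMod 3)) r.2) else TK.zero := by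
  decide

set_option synthInstance.maxSize 1000 in
set_option maxRecDepth 100000 in
set_option maxHeartbeats 1000000 in
private theorem keyK_19 : ∀ r : G6 × G6,
    TK.mul (BK (((1:ZMod 2),(0:ZMod 3)),((0:ZMod 2),(1:ZMod 3)))) (BK r) = if (((1:ZMod 2),(0:ZMod 3)) : G6) = gconj r.2 r.1 then BK (r.1, gmul ((0:ZMod 2),(1:ZMod 3)) r.2) else TK.zero := by
  decide

set_option synthInstance.maxSize 1000 in
set_option maxRecDepth 100000 in
set_option maxHeartbeats 1000000 in
private theorem keyK_20 : ∀ r : G6 × G6,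
    TK.mul (BK (((1:ZMod 2),(0:ZMod 3)),((0:ZMod 2),(2:ZMod 3)))) (BK r) = if (((1:ZMod 2),(0:ZMod 3)) : G6) = gconj r.2 r.1 then BK (r.1, gmul ((0:ZMod 2),(2:ZMod 3)) r.2) else TK.zero := by
  decide

set_option synthInstance.maxSize 1000 in
set_option maxRecDepth 100000 in
set_option maxHeartbeats 1000000 in
private theorem keyK_21 : ∀ r : G6 × G6,
    TK.mul (BK (((1:ZMod 2),(0:ZMod 3)),((1:ZMod 2),(0:ZMod 3)))) (BK r) = if (((1:ZMod 2),(0:ZMod 3)) : G6) = gconj r.2 r.1 then BK (r.1, gmul ((1:ZMod 2),(0:ZMod 3)) r.2) else TK.zero := by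
  decide

set_option synthInstance.maxSize 1000 in
set_option maxRecDepth 100000 in
set_option maxHeartbeats 1000000 in
private theorem keyK_22 : ∀ r : G6 × G6,
    TK.mul (BK (((1:ZMod 2),(0:ZMod 3)),((1:ZMod 2),(1:ZMod 3)))) (BK r) = if (((1:ZMod 2),(0:ZMod 3)) : G6) = gconj r.2 r.1 then BK (r.1, gmul ((1:ZMod 2),(1:ZMod 3)) r.2) else TK.zero := by
  decide

set_option synthInstance.maxSize 1000 in
set_option maxRecDepth 100000 in
set_option maxHeartbeats 1000000 in
private theorem keyK_23 : ∀ r : G6 × G6,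
    TK.mul (BK (((1:ZMod 2),(0:ZMod 3)),((1:ZMod 2),(2:ZMod 3)))) (BK r) = if (((1:ZMod 2),(0:ZMod 3)) : G6) = gconj r.2 r.1 then BK (r.1, gmul ((1:ZMod 2),(2:ZMod 3)) r.2) else TK.zero := by
  decide

set_option synthInstance.maxSize 1000 in
set_option maxRecDepth 100000 in
set_option maxHeartbeats 1000000 in
private theorem keyK_24 : ∀ r : G6 × G6,
    TK.mul (BK (((1:ZMod 2),(1:ZMod 3)),((0:ZMod 2),(0:ZMod 3)))) (BK r) = if (((1:ZMod 2),(1:ZMod 3)) : G6) = gconj r.2 r.1 then BK (r.1, gmul ((0:ZMod 2),(0:ZMod 3)) r.2) else TK.zero := by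
  decide

set_option synthInstance.maxSize 1000 in
set_option maxRecDepth 100000 in
set_option maxHeartbeats 1000000 in
private theorem keyK_25 : ∀ r : G6 × G6,
    TK.mul (BK (((1:ZMod 2),(1:ZMod 3)),((0:ZMod 2),(1:ZMod 3)))) (BK r) = if (((1:ZMod 2),(1:ZMod 3)) : G6) = gconj r.2 r.1 then BK (r.1, gmul ((0:ZMod 2),(1:ZMod 3)) r.2) else TK.zero := by
  decide

set_option synthInstance.maxSize 1000 in
set_option maxRecDepth 100000 in
set_option maxHeartbeats 1000000 in
private theorem keyK_26 : ∀ r : G6 × G6,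
    TK.mul (BK (((1:ZMod 2),(1:ZMod 3)),((0:ZMod 2),(2:ZMod 3)))) (BK r) = if (((1:ZMod 2),(1:ZMod 3)) : G6) = gconj r.2 r.1 then BK (r.1, gmul ((0:ZMod 2),(2:ZMod 3)) r.2) else TK.zero := by
  decide

set_option synthInstance.maxSize 1000 in
set_option maxRecDepth 100000 in
set_option maxHeartbeats 1000000 in
private theorem keyK_27 : ∀ r : G6 × G6,
    TK.mul (BK (((1:ZMod 2),(1:ZMod 3)),((1:ZMod 2),(0:ZMod 3)))) (BK r) = if (((1:ZMod 2),(1:ZMod 3)) : G6) = gconj r.2 r.1 then BK (r.1, gmul ((1:ZMod 2),(0:ZMod 3)) r.2) else TK.zero := by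
  decide

set_option synthInstance.maxSize 1000 in
set_option maxRecDepth 100000 in
set_option maxHeartbeats 1000000 in
private theorem keyK_28 : ∀ r : G6 × G6,
    TK.mul (BK (((1:ZMod 2),(1:ZMod 3)),((1:ZMod 2),(1:ZMod 3)))) (BK r) = if (((1:ZMod 2),(1:ZMod 3)) : G6) = gconj r.2 r.1 then BK (r.1, gmul ((1:ZMod 2),(1:ZMod 3)) r.2) else TK.zero := by
  decide

set_option synthInstance.maxSize 1000 in
set_option maxRecDepth 100000 in
set_option maxHeartbeats 1000000 in
private theorem keyK_29 : ∀ r : G6 × G6,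
    TK.mul (BK (((1:ZMod 2),(1:ZMod 3)),((1:ZMod 2),(2:ZMod 3)))) (BK r) = if (((1:ZMod 2),(1:ZMod 3)) : G6) = gconj r.2 r.1 then BK (r.1, gmul ((1:ZMod 2),(2:ZMod 3)) r.2) else TK.zero := by
  decide

set_option synthInstance.maxSize 1000 in
set_option maxRecDepth 100000 in
set_option maxHeartbeats 1000000 in
private theorem keyK_30 : ∀ r : G6 × G6,
    TK.mul (BK (((1:ZMod 2),(2:ZMod 3)),((0:ZMod 2),(0:ZMod 3)))) (BK r) = if (((1:ZMod 2),(2:ZMod 3)) : G6) = gconj r.2 r.1 then BK (r.1, gmul ((0:ZMod 2),(0:ZMod 3)) r.2) else TK.zero := by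
  decide

set_option synthInstance.maxSize 1000 in
set_option maxRecDepth 100000 in
set_option maxHeartbeats 1000000 in
private theorem keyK_31 : ∀ r : G6 × G6,
    TK.mul (BK (((1:ZMod 2),(2:ZMod 3)),((0:ZMod 2),(1:ZMod 3)))) (BK r) = if (((1:ZMod 2),(2:ZMod 3)) : G6) = gconj r.2 r.1 then BK (r.1, gmul ((0:ZMod 2),(1:ZMod 3)) r.2) else TK.zero := by
  decide

set_option synthInstance.maxSize 1000 in
set_option maxRecDepth 100000 in
set_option maxHeartbeats 1000000 in
private theorem keyK_32 : ∀ r : G6 × G6,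
    TK.mul (BK (((1:ZMod 2),(2:ZMod 3)),((0:ZMod 2),(2:ZMod 3)))) (BK r) = if (((1:ZMod 2),(2:ZMod 3)) : G6) = gconj r.2 r.1 then BK (r.1, gmul ((0:ZMod 2),(2:ZMod 3)) r.2) else TK.zero := by
  decide

set_option synthInstance.maxSize 1000 in
set_option maxRecDepth 100000 in
set_option maxHeartbeats 1000000 in
private theorem keyK_33 : ∀ r : G6 × G6,
    TK.mul (BK (((1:ZMod 2),(2:ZMod 3)),((1:ZMod 2),(0:ZMod 3)))) (BK r) = if (((1:ZMod 2),(2:ZMod 3)) : G6) = gconj r.2 r.1 then BK (r.1, gmul ((1:ZMod 2),(0:ZMod 3)) r.2) else TK.zero := by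
  decide

set_option synthInstance.maxSize 1000 in
set_option maxRecDepth 100000 in
set_option maxHeartbeats 1000000 in
private theorem keyK_34 : ∀ r : G6 × G6,
    TK.mul (BK (((1:ZMod 2),(2:ZMod 3)),((1:ZMod 2),(1:ZMod 3)))) (BK r) = if (((1:ZMod 2),(2:ZMod 3)) : G6) = gconj r.2 r.1 then BK (r.1, gmul ((1:ZMod 2),(1:ZMod 3)) r.2) else TK.zero := by
  decide

set_option synthInstance.maxSize 1000 in
set_option maxRecDepth 100000 in
set_option maxHeartbeats 1000000 in
private theorem keyK_35 : ∀ r : G6 × G6,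
    TK.mul (BK (((1:ZMod 2),(2:ZMod 3)),((1:ZMod 2),(2:ZMod 3)))) (BK r) = if (((1:ZMod 2),(2:ZMod 3)) : G6) = gconj r.2 r.1 then BK (r.1, gmul ((1:ZMod 2),(2:ZMod 3)) r.2) else TK.zero := by
  decide

/-- `B` realizes the structure constants of the tube algebra. -/
theorem keyK : ∀ q r : G6 × G6,
    TK.mul (BK q) (BK r) = if q.1 = gconj r.2 r.1 then BK (r.1, gmul q.2 r.2) else TK.zero := by
  intro q
  fin_cases q
  exacts [keyK_0, keyK_1, keyK_2, keyK_3, keyK_4, keyK_5, keyK_6, keyK_7, keyK_8, keyK_9, keyK_10, keyK_11, keyK_12, keyK_13, keyK_14, keyK_15, keyK_16, keyK_17, keyK_18, keyK_19, keyK_20, keyK_21, keyK_22, keyK_23, keyK_24, keyK_25, keyK_26, keyK_27, keyK_28, keyK_29, keyK_30, keyK_31, keyK_32, keyK_33, keyK_34, keyK_35]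

set_option synthInstance.maxSize 1000 in
set_option maxRecDepth 100000 in
set_option maxHeartbeats 1000000 in
private theorem pairK_0 : ∀ p : G6 × G6,
    TK.pair (NK (((0:ZMod 2),(0:ZMod 3)),((0:ZMod 2),(0:ZMod 3)))) (BK p) = if ((((0:ZMod 2),(0:ZMod 3)),((0:ZMod 2),(0:ZMod 3))) : (G6 × G6)) = p then 6 else 0 := by
  decide

set_option synthInstance.maxSize 1000 in
set_option maxRecDepth 100000 in
set_option maxHeartbeats 1000000 in
private theorem pairK_1 : ∀ p : G6 × G6,
    TK.pair (NK (((0:ZMod 2),(0:ZMod 3)),((0:ZMod 2),(1:ZMod 3)))) (BK p) = if ((((0:ZMod 2),(0:ZMod 3)),((0:ZMod 2),(1:ZMod 3))) : (G6 × G6)) = p then 6 else 0 := by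
  decide

set_option synthInstance.maxSize 1000 in
set_option maxRecDepth 100000 in
set_option maxHeartbeats 1000000 in
private theorem pairK_2 : ∀ p : G6 × G6,
    TK.pair (NK (((0:ZMod 2),(0:ZMod 3)),((0:ZMod 2),(2:ZMod 3)))) (BK p) = if ((((0:ZMod 2),(0:ZMod 3)),((0:ZMod 2),(2:ZMod 3))) : (G6 × G6)) = p then 6 else 0 := by
  decide

set_option synthInstance.maxSize 1000 in
set_option maxRecDepth 100000 in
set_option maxHeartbeats 1000000 in
private theorem pairK_3 : ∀ p : G6 × G6,
    TK.pair (NK (((0:ZMod 2),(0:ZMod 3)),((1:ZMod 2),(0:ZMod 3)))) (BK p) = if ((((0:ZMod 2),(0:ZMod 3)),((1:ZMod 2),(0:ZMod 3))) : (G6 × G6)) = p then 6 else 0 := by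
  decide

set_option synthInstance.maxSize 1000 in
set_option maxRecDepth 100000 in
set_option maxHeartbeats 1000000 in
private theorem pairK_4 : ∀ p : G6 × G6,
    TK.pair (NK (((0:ZMod 2),(0:ZMod 3)),((1:ZMod 2),(1:ZMod 3)))) (BK p) = if ((((0:ZMod 2),(0:ZMod 3)),((1:ZMod 2),(1:ZMod 3))) : (G6 × G6)) = p then 6 else 0 := by
  decide

set_option synthInstance.maxSize 1000 in
set_option maxRecDepth 100000 in
set_option maxHeartbeats 1000000 in
private theorem pairK_5 : ∀ p : G6 × G6,
    TK.pair (NK (((0:ZMod 2),(0:ZMod 3)),((1:ZMod 2),(2:ZMod 3)))) (BK p) = if ((((0:ZMod 2),(0:ZMod 3)),((1:ZMod 2),(2:ZMod 3))) : (G6 × G6)) = p then 6 else 0 := by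
  decide

set_option synthInstance.maxSize 1000 in
set_option maxRecDepth 100000 in
set_option maxHeartbeats 1000000 in
private theorem pairK_6 : ∀ p : G6 × G6,
    TK.pair (NK (((0:ZMod 2),(1:ZMod 3)),((0:ZMod 2),(0:ZMod 3)))) (BK p) = if ((((0:ZMod 2),(1:ZMod 3)),((0:ZMod 2),(0:ZMod 3))) : (G6 × G6)) = p then 6 else 0 := by
  decide

set_option synthInstance.maxSize 1000 in
set_option maxRecDepth 100000 in
set_option maxHeartbeats 1000000 in
private theorem pairK_7 : ∀ p : G6 × G6,
    TK.pair (NK (((0:ZMod 2),(1:ZMod 3)),((0:ZMod 2),(1:ZMod 3)))) (BK p) = if ((((0:ZMod 2),(1:ZMod 3)),((0:ZMod 2),(1:ZMod 3))) : (G6 × G6)) = p then 6 else 0 := by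
  decide

set_option synthInstance.maxSize 1000 in
set_option maxRecDepth 100000 in
set_option maxHeartbeats 1000000 in
private theorem pairK_8 : ∀ p : G6 × G6,
    TK.pair (NK (((0:ZMod 2),(1:ZMod 3)),((0:ZMod 2),(2:ZMod 3)))) (BK p) = if ((((0:ZMod 2),(1:ZMod 3)),((0:ZMod 2),(2:ZMod 3))) : (G6 × G6)) = p then 6 else 0 := by
  decide

set_option synthInstance.maxSize 1000 in
set_option maxRecDepth 100000 in
set_option maxHeartbeats 1000000 in
private theorem pairK_9 : ∀ p : G6 × G6,
    TK.pair (NK (((0:ZMod 2),(1:ZMod 3)),((1:ZMod 2),(0:ZMod 3)))) (BK p) = if ((((0:ZMod 2),(1:ZMod 3)),((1:ZMod 2),(0:ZMod 3))) : (G6 × G6)) = p then 6 else 0 := by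
  decide

set_option synthInstance.maxSize 1000 in
set_option maxRecDepth 100000 in
set_option maxHeartbeats 1000000 in
private theorem pairK_10 : ∀ p : G6 × G6,
    TK.pair (NK (((0:ZMod 2),(1:ZMod 3)),((1:ZMod 2),(1:ZMod 3)))) (BK p) = if ((((0:ZMod 2),(1:ZMod 3)),((1:ZMod 2),(1:ZMod 3))) : (G6 × G6)) = p then 6 else 0 := by
  decide

set_option synthInstance.maxSize 1000 in
set_option maxRecDepth 100000 in
set_option maxHeartbeats 1000000 in
private theorem pairK_11 : ∀ p : G6 × G6,
    TK.pair (NK (((0:ZMod 2),(1:ZMod 3)),((1:ZMod 2),(2:ZMod 3)))) (BK p) = if ((((0:ZMod 2),(1:ZMod 3)),((1:ZMod 2),(2:ZMod 3))) : (G6 × G6)) = p then 6 else 0 := by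
  decide

set_option synthInstance.maxSize 1000 in
set_option maxRecDepth 100000 in
set_option maxHeartbeats 1000000 in
private theorem pairK_12 : ∀ p : G6 × G6,
    TK.pair (NK (((0:ZMod 2),(2:ZMod 3)),((0:ZMod 2),(0:ZMod 3)))) (BK p) = if ((((0:ZMod 2),(2:ZMod 3)),((0:ZMod 2),(0:ZMod 3))) : (G6 × G6)) = p then 6 else 0 := by
  decide

set_option synthInstance.maxSize 1000 in
set_option maxRecDepth 100000 in
set_option maxHeartbeats 1000000 in
private theorem pairK_13 : ∀ p : G6 × G6,
    TK.pair (NK (((0:ZMod 2),(2:ZMod 3)),((0:ZMod 2),(1:ZMod 3)))) (BK p) = if ((((0:ZMod 2),(2:ZMod 3)),((0:ZMod 2),(1:ZMod 3))) : (G6 × G6)) = p then 6 else 0 := by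
  decide

set_option synthInstance.maxSize 1000 in
set_option maxRecDepth 100000 in
set_option maxHeartbeats 1000000 in
private theorem pairK_14 : ∀ p : G6 × G6,
    TK.pair (NK (((0:ZMod 2),(2:ZMod 3)),((0:ZMod 2),(2:ZMod 3)))) (BK p) = if ((((0:ZMod 2),(2:ZMod 3)),((0:ZMod 2),(2:ZMod 3))) : (G6 × G6)) = p then 6 else 0 := by
  decide

set_option synthInstance.maxSize 1000 in
set_option maxRecDepth 100000 in
set_option maxHeartbeats 1000000 in
private theorem pairK_15 : ∀ p : G6 × G6,
    TK.pair (NK (((0:ZMod 2),(2:ZMod 3)),((1:ZMod 2),(0:ZMod 3)))) (BK p) = if ((((0:ZMod 2),(2:ZMod 3)),((1:ZMod 2),(0:ZMod 3))) : (G6 × G6)) = p then 6 else 0 := by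
  decide

set_option synthInstance.maxSize 1000 in
set_option maxRecDepth 100000 in
set_option maxHeartbeats 1000000 in
private theorem pairK_16 : ∀ p : G6 × G6,
    TK.pair (NK (((0:ZMod 2),(2:ZMod 3)),((1:ZMod 2),(1:ZMod 3)))) (BK p) = if ((((0:ZMod 2),(2:ZMod 3)),((1:ZMod 2),(1:ZMod 3))) : (G6 × G6)) = p then 6 else 0 := by
  decide

set_option synthInstance.maxSize 1000 in
set_option maxRecDepth 100000 in
set_option maxHeartbeats 1000000 in
private theorem pairK_17 : ∀ p : G6 × G6,
    TK.pair (NK (((0:ZMod 2),(2:ZMod 3)),((1:ZMod 2),(2:ZMod 3)))) (BK p) = if ((((0:ZMod 2),(2:ZMod 3)),((1:ZMod 2),(2:ZMod 3))) : (G6 × G6)) = p then 6 else 0 := by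
  decide

set_option synthInstance.maxSize 1000 in
set_option maxRecDepth 100000 in
set_option maxHeartbeats 1000000 in
private theorem pairK_18 : ∀ p : G6 × G6,
    TK.pair (NK (((1:ZMod 2),(0:ZMod 3)),((0:ZMod 2),(0:ZMod 3)))) (BK p) = if ((((1:ZMod 2),(0:ZMod 3)),((0:ZMod 2),(0:ZMod 3))) : (G6 × G6)) = p then 6 else 0 := by
  decide

set_option synthInstance.maxSize 1000 in
set_option maxRecDepth 100000 in
set_option maxHeartbeats 1000000 in
private theorem pairK_19 : ∀ p : G6 × G6,
    TK.pair (NK (((1:ZMod 2),(0:ZMod 3)),((0:ZMod 2),(1:ZMod 3)))) (BK p) = if ((((1:ZMod 2),(0:ZMod 3)),((0:ZMod 2),(1:ZMod 3))) : (G6 × G6)) = p then 6 else 0 := by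
  decide

set_option synthInstance.maxSize 1000 in
set_option maxRecDepth 100000 in
set_option maxHeartbeats 1000000 in
private theorem pairK_20 : ∀ p : G6 × G6,
    TK.pair (NK (((1:ZMod 2),(0:ZMod 3)),((0:ZMod 2),(2:ZMod 3)))) (BK p) = if ((((1:ZMod 2),(0:ZMod 3)),((0:ZMod 2),(2:ZMod 3))) : (G6 × G6)) = p then 6 else 0 := by
  decide

set_option synthInstance.maxSize 1000 in
set_option maxRecDepth 100000 in
set_option maxHeartbeats 1000000 in
private theorem pairK_21 : ∀ p : G6 × G6,
    TK.pair (NK (((1:ZMod 2),(0:ZMod 3)),((1:ZMod 2),(0:ZMod 3)))) (BK p) = if ((((1:ZMod 2),(0:ZMod 3)),((1:ZMod 2),(0:ZMod 3))) : (G6 × G6)) = p then 6 else 0 := by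
  decide

set_option synthInstance.maxSize 1000 in
set_option maxRecDepth 100000 in
set_option maxHeartbeats 1000000 in
private theorem pairK_22 : ∀ p : G6 × G6,
    TK.pair (NK (((1:ZMod 2),(0:ZMod 3)),((1:ZMod 2),(1:ZMod 3)))) (BK p) = if ((((1:ZMod 2),(0:ZMod 3)),((1:ZMod 2),(1:ZMod 3))) : (G6 × G6)) = p then 6 else 0 := by
  decide

set_option synthInstance.maxSize 1000 in
set_option maxRecDepth 100000 in
set_option maxHeartbeats 1000000 in
private theorem pairK_23 : ∀ p : G6 × G6,
    TK.pair (NK (((1:ZMod 2),(0:ZMod 3)),((1:ZMod 2),(2:ZMod 3)))) (BK p) = if ((((1:ZMod 2),(0:ZMod 3)),((1:ZMod 2),(2:ZMod 3))) : (G6 × G6)) = p then 6 else 0 := by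
  decide

set_option synthInstance.maxSize 1000 in
set_option maxRecDepth 100000 in
set_option maxHeartbeats 1000000 in
private theorem pairK_24 : ∀ p : G6 × G6,
    TK.pair (NK (((1:ZMod 2),(1:ZMod 3)),((0:ZMod 2),(0:ZMod 3)))) (BK p) = if ((((1:ZMod 2),(1:ZMod 3)),((0:ZMod 2),(0:ZMod 3))) : (G6 × G6)) = p then 6 else 0 := by
  decide

set_option synthInstance.maxSize 1000 in
set_option maxRecDepth 100000 in
set_option maxHeartbeats 1000000 in
private theorem pairK_25 : ∀ p : G6 × G6,
    TK.pair (NK (((1:ZMod 2),(1:ZMod 3)),((0:ZMod 2),(1:ZMod 3)))) (BK p) = if ((((1:ZMod 2),(1:ZMod 3)),((0:ZMod 2),(1:ZMod 3))) : (G6 × G6)) = p then 6 else 0 := by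
  decide

set_option synthInstance.maxSize 1000 in
set_option maxRecDepth 100000 in
set_option maxHeartbeats 1000000 in
private theorem pairK_26 : ∀ p : G6 × G6,
    TK.pair (NK (((1:ZMod 2),(1:ZMod 3)),((0:ZMod 2),(2:ZMod 3)))) (BK p) = if ((((1:ZMod 2),(1:ZMod 3)),((0:ZMod 2),(2:ZMod 3))) : (G6 × G6)) = p then 6 else 0 := by
  decide

set_option synthInstance.maxSize 1000 in
set_option maxRecDepth 100000 in
set_option maxHeartbeats 1000000 in
private theorem pairK_27 : ∀ p : G6 × G6,
    TK.pair (NK (((1:ZMod 2),(1:ZMod 3)),((1:ZMod 2),(0:ZMod 3)))) (BK p) = if ((((1:ZMod 2),(1:ZMod 3)),((1:ZMod 2),(0:ZMod 3))) : (G6 × G6)) = p then 6 else 0 := by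
  decide

set_option synthInstance.maxSize 1000 in
set_option maxRecDepth 100000 in
set_option maxHeartbeats 1000000 in
private theorem pairK_28 : ∀ p : G6 × G6,
    TK.pair (NK (((1:ZMod 2),(1:ZMod 3)),((1:ZMod 2),(1:ZMod 3)))) (BK p) = if ((((1:ZMod 2),(1:ZMod 3)),((1:ZMod 2),(1:ZMod 3))) : (G6 × G6)) = p then 6 else 0 := by
  decide

set_option synthInstance.maxSize 1000 in
set_option maxRecDepth 100000 in
set_option maxHeartbeats 1000000 in
private theorem pairK_29 : ∀ p : G6 × G6,
    TK.pair (NK (((1:ZMod 2),(1:ZMod 3)),((1:ZMod 2),(2:ZMod 3)))) (BK p) = if ((((1:ZMod 2),(1:ZMod 3)),((1:ZMod 2),(2:ZMod 3))) : (G6 × G6)) = p then 6 else 0 := by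
  decide

set_option synthInstance.maxSize 1000 in
set_option maxRecDepth 100000 in
set_option maxHeartbeats 1000000 in
private theorem pairK_30 : ∀ p : G6 × G6,
    TK.pair (NK (((1:ZMod 2),(2:ZMod 3)),((0:ZMod 2),(0:ZMod 3)))) (BK p) = if ((((1:ZMod 2),(2:ZMod 3)),((0:ZMod 2),(0:ZMod 3))) : (G6 × G6)) = p then 6 else 0 := by
  decide

set_option synthInstance.maxSize 1000 in
set_option maxRecDepth 100000 in
set_option maxHeartbeats 1000000 in
private theorem pairK_31 : ∀ p : G6 × G6,
    TK.pair (NK (((1:ZMod 2),(2:ZMod 3)),((0:ZMod 2),(1:ZMod 3)))) (BK p) = if ((((1:ZMod 2),(2:ZMod 3)),((0:ZMod 2),(1:ZMod 3))) : (G6 × G6)) = p then 6 else 0 := by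
  decide

set_option synthInstance.maxSize 1000 in
set_option maxRecDepth 100000 in
set_option maxHeartbeats 1000000 in
private theorem pairK_32 : ∀ p : G6 × G6,
    TK.pair (NK (((1:ZMod 2),(2:ZMod 3)),((0:ZMod 2),(2:ZMod 3)))) (BK p) = if ((((1:ZMod 2),(2:ZMod 3)),((0:ZMod 2),(2:ZMod 3))) : (G6 × G6)) = p then 6 else 0 := by
  decide

set_option synthInstance.maxSize 1000 in
set_option maxRecDepth 100000 in
set_option maxHeartbeats 1000000 in
private theorem pairK_33 : ∀ p : G6 × G6,
    TK.pair (NK (((1:ZMod 2),(2:ZMod 3)),((1:ZMod 2),(0:ZMod 3)))) (BK p) = if ((((1:ZMod 2),(2:ZMod 3)),((1:ZMod 2),(0:ZMod 3))) : (G6 × G6)) = p then 6 else 0 := by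
  decide

set_option synthInstance.maxSize 1000 in
set_option maxRecDepth 100000 in
set_option maxHeartbeats 1000000 in
private theorem pairK_34 : ∀ p : G6 × G6,
    TK.pair (NK (((1:ZMod 2),(2:ZMod 3)),((1:ZMod 2),(1:ZMod 3)))) (BK p) = if ((((1:ZMod 2),(2:ZMod 3)),((1:ZMod 2),(1:ZMod 3))) : (G6 × G6)) = p then 6 else 0 := by
  decide

set_option synthInstance.maxSize 1000 in
set_option maxRecDepth 100000 in
set_option maxHeartbeats 1000000 in
private theorem pairK_35 : ∀ p : G6 × G6,
    TK.pair (NK (((1:ZMod 2),(2:ZMod 3)),((1:ZMod 2),(2:ZMod 3)))) (BK p) = if ((((1:ZMod 2),(2:ZMod 3)),((1:ZMod 2),(2:ZMod 3))) : (G6 × G6)) = p then 6 else 0 := by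
  decide

/-- `N` is (6 times) the dual basis of `B` under the trace pairing. -/
theorem pairK : ∀ q p : G6 × G6, TK.pair (NK q) (BK p) = if q = p then 6 else 0 := by
  intro q
  fin_cases q
  exacts [pairK_0, pairK_1, pairK_2, pairK_3, pairK_4, pairK_5, pairK_6, pairK_7, pairK_8, pairK_9, pairK_10, pairK_11, pairK_12, pairK_13, pairK_14, pairK_15, pairK_16, pairK_17, pairK_18, pairK_19, pairK_20, pairK_21, pairK_22, pairK_23, pairK_24, pairK_25, pairK_26, pairK_27, pairK_28, pairK_29, pairK_30, pairK_31, pairK_32, pairK_33, pairK_34, pairK_35]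

/-! ### The embedding `ℤ[ζ] → ℂ`. -/

def zC : ℂ := ⟨-1/2, Real.sqrt 3 / 2⟩

theorem zC_sq : zC ^ 2 = -1 - zC := by
  have h3 : Real.sqrt 3 * Real.sqrt 3 = 3 := Real.mul_self_sqrt (by norm_num)
  apply Complex.ext <;>
    simp [zC, pow_two, Complex.mul_re, Complex.mul_im] <;> nlinarith [h3]

def phi : Eis →+* ℂ where
  toFun a := (a.x : ℂ) + (a.y : ℂ) * zC
  map_one' := by simp
  map_zero' := by simp
  map_add' a b := by
    simp only [Eis.add_x, Eis.add_y]
    push_cast; ring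
  map_mul' a b := by
    simp only [Eis.mul_x, Eis.mul_y]
    push_cast
    linear_combination (-(a.y * b.y) : ℂ) * zC_sq

/-! ### Mapping the tuple matrices to honest complex matrices. -/

def phi2 (A : M2) : Mat 2 := !![phi A.a, phi A.b; phi A.c, phi A.d]

def phi3 (A : M3) : Mat 3 :=
  !![phi A.a, phi A.b, phi A.c; phi A.d, phi A.e, phi A.f; phi A.g, phi A.h, phi A.i]

abbrev Tgt := ℂ × ℂ × Mat 2 × Mat 2 × Mat 2 × Mat 2 × Mat 3 × Mat 3

def Phi (u : TK) : Tgt :=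
  (phi u.1, phi u.2.1, phi2 u.2.2.1, phi2 u.2.2.2.1, phi2 u.2.2.2.2.1,
   phi2 u.2.2.2.2.2.1, phi3 u.2.2.2.2.2.2.1, phi3 u.2.2.2.2.2.2.2)

theorem phi2_mul (A B : M2) : phi2 (A.mul B) = phi2 A * phi2 B := by
  rw [phi2, phi2, phi2, Matrix.mul_fin_two]
  simp [M2.mul, map_add, map_mul]

theorem phi3_mul (A B : M3) : phi3 (A.mul B) = phi3 A * phi3 B := by
  rw [phi3, phi3, phi3, Matrix.mul_fin_three]
  simp [M3.mul, map_add, map_mul]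

theorem phi2_zero : phi2 M2.zero = 0 := by
  ext i j
  fin_cases i <;> fin_cases j <;>
    simp [phi2, M2.zero, Matrix.vecHead, Matrix.vecTail]

theorem phi3_zero : phi3 M3.zero = 0 := by
  ext i j
  fin_cases i <;> fin_cases j <;>
    simp [phi3, M3.zero, Matrix.vecHead, Matrix.vecTail]

theorem Phi_mul (u v : TK) : Phi (TK.mul u v) = Phi u * Phi v := by
  simp only [Phi, TK.mul, Prod.mk_mul_mk, map_mul, phi2_mul, phi3_mul]

theorem Phi_zero : Phi TK.zero = 0 := by
  simp only [Phi, TK.zero, map_zero, phi2_zero, phi3_zero, Prod.mk_zero_zero]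

/-! ### The complex trace pairing. -/

def trC2 (A B : Mat 2) : ℂ := A 0 0 * B 0 0 + A 0 1 * B 1 0 + A 1 0 * B 0 1 + A 1 1 * B 1 1

def trC3 (A B : Mat 3) : ℂ :=
  A 0 0 * B 0 0 + A 0 1 * B 1 0 + A 0 2 * B 2 0 +
  A 1 0 * B 0 1 + A 1 1 * B 1 1 + A 1 2 * B 2 1 +
  A 2 0 * B 0 2 + A 2 1 * B 1 2 + A 2 2 * B 2 2

def pairC (u v : Tgt) : ℂ :=
  u.1*v.1 + u.2.1*v.2.1 + trC2 u.2.2.1 v.2.2.1 + trC2 u.2.2.2.1 v.2.2.2.1 +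
  trC2 u.2.2.2.2.1 v.2.2.2.2.1 + trC2 u.2.2.2.2.2.1 v.2.2.2.2.2.1 +
  trC3 u.2.2.2.2.2.2.1 v.2.2.2.2.2.2.1 + trC3 u.2.2.2.2.2.2.2 v.2.2.2.2.2.2.2

theorem pairC_phi (u v : TK) : pairC (Phi u) (Phi v) = phi (TK.pair u v) := by
  simp only [pairC, Phi, TK.pair, trC2, trC3, tr2, tr3, phi2, phi3, map_add, map_mul,
    Matrix.cons_val', Matrix.cons_val_zero, Matrix.cons_val_one, Matrix.head_cons,
    Matrix.empty_val', Matrix.cons_val_fin_one, Matrix.head_fin_const, Matrix.of_apply,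
    Matrix.cons_val_two, Matrix.tail_cons, Matrix.head_fin_const]
  try ring

theorem pairC_add (u v w : Tgt) : pairC u (v + w) = pairC u v + pairC u w := by
  simp only [pairC, trC2, trC3, Prod.fst_add, Prod.snd_add, Matrix.add_apply]
  ring

theorem pairC_smul (u : Tgt) (c : ℂ) (v : Tgt) : pairC u (c • v) = c * pairC u v := by
  simp only [pairC, trC2, trC3, Prod.smul_fst, Prod.smul_snd, Matrix.smul_apply,
    smul_eq_mul]
  ring

theorem pairC_zero (u : Tgt) : pairC u 0 = 0 := by
  simp [pairC, trC2, trC3]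

/-- Additive-map version of the pairing (for `map_sum`). -/
def pairHom (u : Tgt) : Tgt →+ ℂ := AddMonoidHom.mk' (pairC u) (pairC_add u)

/-! ### The linear map realizing the isomorphism. -/

def PB (q : G6 × G6) : Tgt := Phi (BK q)
def PN (q : G6 × G6) : Tgt := Phi (NK q)

def eL : Tube →ₗ[ℂ] Tgt where
  toFun x := ∑ q : G6 × G6, x q • PB q
  map_add' x y := by simp [add_smul, Finset.sum_add_distrib]
  map_smul' c x := by simp [Finset.smul_sum, smul_smul]

theorem PB_mul (q r : G6 × G6) :
    PB q * PB r = if q.1 = gconj r.2 r.1 then PB (r.1, gmul q.2 r.2) else 0 := by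
  rw [PB, PB, ← Phi_mul, keyK q r]
  split <;> simp [PB, Phi_zero]

theorem pair_PN_PB (q p : G6 × G6) : pairC (PN q) (PB p) = if q = p then 6 else 0 := by
  rw [PN, PB, pairC_phi, pairK q p]
  split <;> simp [map_ofNat]

theorem eL_mul (x y : Tube) : eL (tmul x y) = eL x * eL y := by
  show (∑ p : G6 × G6, tmul x y p • PB p) =
    (∑ q : G6 × G6, x q • PB q) * (∑ r : G6 × G6, y r • PB r)
  rw [Finset.sum_mul_sum]
  simp only [tmul, Finset.sum_smul]
  rw [Finset.sum_comm]
  refine Finset.sum_congr rfl fun q _ => ?_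
  rw [Finset.sum_comm]
  refine Finset.sum_congr rfl fun r _ => ?_
  rw [smul_mul_smul_comm, PB_mul, smul_ite, smul_zero]
  have hcond : ∀ p : G6 × G6,
      (q.1 = gconj r.2 r.1 ∧ p.1 = r.1 ∧ p.2 = gmul q.2 r.2) ↔
      (p = (r.1, gmul q.2 r.2) ∧ q.1 = gconj r.2 r.1) := by
    intro p
    constructor
    · rintro ⟨h1, h2, h3⟩; exact ⟨Prod.ext h2 h3, h1⟩
    · rintro ⟨h1, h2⟩; exact ⟨h2, by simp [h1], by simp [h1]⟩
  calc ∑ p : G6 × G6,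
        (if q.1 = gconj r.2 r.1 ∧ p.1 = r.1 ∧ p.2 = gmul q.2 r.2 then x q * y r else 0) • PB p
      = ∑ p : G6 × G6, (if p = (r.1, gmul q.2 r.2) then
          (if q.1 = gconj r.2 r.1 then (x q * y r) • PB p else 0) else 0) := by
        refine Finset.sum_congr rfl fun p _ => ?_
        rw [ite_smul, zero_smul]
        simp only [hcond p, ite_and]
    _ = if q.1 = gconj r.2 r.1 then (x q * y r) • PB (r.1, gmul q.2 r.2) else 0 := by
        rw [Finset.sum_ite_eq' Finset.univ ((r.1, gmul q.2 r.2) : G6 × G6)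
          (fun p => if q.1 = gconj r.2 r.1 then (x q * y r) • PB p else 0)]
        simp

theorem eL_inj : Function.Injective eL := by
  have hz : ∀ z : Tube, eL z = 0 → z = 0 := by
    intro z hz
    funext q
    have h := congrArg (pairC (PN q)) hz
    rw [pairC_zero] at h
    have h2 : pairC (PN q) (eL z) = z q * 6 := by
      show pairC (PN q) (∑ p : G6 × G6, z p • PB p) = z q * 6
      rw [show pairC (PN q) (∑ p : G6 × G6, z p • PB p)
          = ∑ p : G6 × G6, pairC (PN q) (z p • PB p) from map_sum (pairHom (PN q)) _ _]
      simp only [pairC_smul, pair_PN_PB, mul_ite, mul_zero]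
      rw [Finset.sum_ite_eq Finset.univ q (fun p => z p * 6)]
      simp
    rw [h2] at h
    have : z q * 6 = 0 := h
    simpa using this
  intro x y hxy
  have : eL (x - y) = 0 := by rw [map_sub, hxy, sub_self]
  have h0 := hz _ this
  funext q
  have := congrFun h0 q
  simp only [Pi.sub_apply, Pi.zero_apply, sub_eq_zero] at this
  exact this

theorem finrank_Tube : Module.finrank ℂ Tube = 36 := by
  rw [Module.finrank_fintype_fun_eq_card]
  simp [Fintype.card_prod]

theorem finrank_Tgt : Module.finrank ℂ Tgt = 36 := by
  simp [Module.finrank_prod, Module.finrank_matrix, Module.finrank_self]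

/-- The tube algebra of `S₃` is isomorphic as a ℂ-algebra to
`ℂ × ℂ × M₂(ℂ) × M₂(ℂ) × M₂(ℂ) × M₂(ℂ) × M₃(ℂ) × M₃(ℂ)`; in particular it is a
semisimple `36`-dimensional ℂ-algebra whose (eight) simple modules have dimensions
`1, 1, 2, 2, 2, 2, 3, 3`. -/
theorem tubeAlgebra_s3_artinWedderburn :
    (∃ e : Tube ≃ₗ[ℂ] (ℂ × ℂ × Mat 2 × Mat 2 × Mat 2 × Mat 2 × Mat 3 × Mat 3),
      ∀ x y : Tube, e (tmul x y) = e x * e y) ∧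
    Module.finrank ℂ Tube = 36 := by
  refine ⟨⟨eL.linearEquivOfInjective eL_inj (finrank_Tube.trans finrank_Tgt.symm),
    fun x y => ?_⟩, finrank_Tube⟩
  simp only [LinearMap.linearEquivOfInjective_apply, eL_mul]

end
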